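/- Let R be a semiartinian von Neumann regular ring with primitive factors artinian, with socle sequence (S_α)_{α ≤ σ+1}. If M is a weakly R-projective right R-module with socle sequence (M_β), then M_β = M·S_β for every β (in particular the β-th layer of M is a projective R/S_β-module, i.e., M is layer projective). -/

import Mathlib

/-!
Only `M_β ≤ M·S_β` needs proof, by induction on `β`; limits are immediate. At a successor
`c + 1` every simple submodule `T` of `M / M_c` must lie in `(M / M_c)·S_{c+1}`. Let `γ` be least
with `S_{γ+1} T ≠ 0` (it exists as `R` is semiartinian); as `S_c` kills `M / M_c`, `c ≤ γ`.
If `γ = c`, simplicity gives `T = S_{c+1} T`. If `c < γ`, then `T` is a quotient, hence a direct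
summand, of the semisimple layer `S_{γ+1}/S_γ`. Simple modules over a regular ring with artinian
primitive factors are injective (Baer's criterion, `R/ann T` being semisimple), so `T` also splits
off `M / M_c`. Weak projectivity lifts the resulting map `M → S_{γ+1}/S_γ`, which is nonzero on
`M_{c+1}`, to `S_{γ+1}`; but every map `M → R` sends `M_{c+1} ⊆ M_γ` into `S_γ`.
-/

universe u

open Submodule

/-- The socle of a module: the supremum of all simple submodules. -/
noncomputable def socle (R : Type u) [Ring R] (M : Type u) [AddCommGroup M] [Module R M] :
    Submodule R M :=
  sSup {S : Submodule R M | IsAtom S}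

/-- The Loewy (socle) sequence of a module, defined by transfinite recursion:
`loewy R M 0 = ⊥`, `loewy R M (α+1) / loewy R M α = Soc (M ⧸ loewy R M α)`, and unions
at limit ordinals. -/
noncomputable def loewy (R : Type u) [Ring R] (M : Type u) [AddCommGroup M] [Module R M]
    (o : Ordinal.{u}) : Submodule R M :=
  o.limitRecOn ⊥ (fun _ N => (socle R (M ⧸ N)).comap N.mkQ)
    (fun o _ IH => ⨆ (b : Ordinal) (h : b < o), IH b h)

/-- The Loewy length of a module: the least ordinal `o` with `loewy R M o = ⊤`. -/
noncomputable def loewyLength (R : Type u) [Ring R] (M : Type u) [AddCommGroup M]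
    [Module R M] : Ordinal.{u} :=
  sInf {o : Ordinal | loewy R M o = ⊤}

/-- A ring is semiartinian if every nonzero module has a nonzero socle. -/
def IsSemiartinianRing (R : Type u) [Ring R] : Prop :=
  ∀ (M : Type u) [AddCommGroup M] [Module R M], Nontrivial M → socle R M ≠ ⊥

/-- A ring is von Neumann regular if for every `r` there is `s` with `r * s * r = r`. -/
def IsVonNeumannRegularRing (R : Type u) [Ring R] : Prop :=
  ∀ r : R, ∃ s : R, r * s * r = r

/-- `R` has primitive factors artinian: for every primitive ideal `P` (= annihilator of a
simple module), the factor `R/P` is artinian. -/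
def HasPrimitiveFactorsArtinian (R : Type u) [Ring R] : Prop :=
  ∀ (M : Type u) [AddCommGroup M] [Module R M], IsSimpleModule R M →
    IsArtinian R (R ⧸ (Module.annihilator R M : Submodule R R))

/-- The `α`-th layer of the Loewy sequence of `R`, as a submodule of `R ⧸ loewy R R α`. -/
noncomputable def loewyLayer (R : Type u) [Ring R] (α : Ordinal.{u}) :
    Submodule R (R ⧸ loewy R R α) :=
  (loewy R R (α + 1)).map (loewy R R α).mkQ

/-- The canonical projection `π_α : S_{α+1} → S_{α+1}/S_α`. -/
noncomputable def layerProj (R : Type u) [Ring R] (α : Ordinal.{u}) :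
    (loewy R R (α + 1) : Submodule R R) →ₗ[R] (loewyLayer R α) :=
  LinearMap.codRestrict _ ((loewy R R α).mkQ.comp (loewy R R (α + 1)).subtype)
    (fun x => ⟨(x : R), x.2, rfl⟩)

/-- `M` is weakly `R`-projective: every homomorphism from `M` to a layer `S_{α+1}/S_α`
(`0 < α`) with finitely generated image factors through `π_α : S_{α+1} → S_{α+1}/S_α`. -/
def IsWeaklyRProjective (R : Type u) [Ring R] (M : Type u) [AddCommGroup M]
    [Module R M] : Prop :=
  ∀ α : Ordinal.{u}, 0 < α →
    ∀ φ : M →ₗ[R] (loewyLayer R α), (LinearMap.range φ).FG →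
      ∃ ψ : M →ₗ[R] (loewy R R (α + 1) : Submodule R R), (layerProj R α).comp ψ = φ

/-- `M` is layer projective: for each `0 < α`, every simple submodule of the `α`-th layer of
`M` is isomorphic to a simple (direct summand) submodule of the `α`-th layer of `R`, i.e. the
`α`-th layer of `M` is a projective `R/S_α`-module. -/
def IsLayerProjective (R : Type u) [Ring R] (M : Type u) [AddCommGroup M]
    [Module R M] : Prop :=
  ∀ α : Ordinal.{u}, 0 < α →
    ∀ T : Submodule R ((loewy R M (α + 1)).map (loewy R M α).mkQ), IsAtom T →
      ∃ T' : Submodule R (loewyLayer R α), IsAtom T' ∧ Nonempty (T ≃ₗ[R] T')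

/-- The submodule `M·S` of `M`, generated by all products `s • m` with `s ∈ S`. -/
def smulSub (R : Type u) [Ring R] (M : Type u) [AddCommGroup M] [Module R M]
    (S : Submodule R R) : Submodule R M :=
  Submodule.span R {x : M | ∃ s ∈ S, ∃ m : M, s • m = x}

theorem complementedLattice_of_wellFoundedLT {α : Type*} [Lattice α] [BoundedOrder α]
    [IsModularLattice α] [WellFoundedLT α]
    (h : ∀ a : α, a ≠ ⊥ → ∃ b ≤ a, b ≠ ⊥ ∧ IsComplemented b) : ComplementedLattice α := by
  refine ⟨fun a => ?_⟩
  obtain ⟨b, hb, hmin⟩ :=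
    wellFounded_lt.has_min {b : α | Codisjoint a b} ⟨⊤, codisjoint_top_right⟩
  refine ⟨b, disjoint_iff.2 (by_contra fun hne => ?_), hb⟩
  obtain ⟨c, hc, hc0, d, hcd⟩ := h _ hne
  have hcb : c ≤ b := hc.trans inf_le_right
  -- a minimal supplement `b` of `a` cannot meet `a`: cutting `b` down by a complement `d` of
  -- some `c ≤ a ⊓ b` would give a smaller supplement
  have hsupp : Codisjoint a (b ⊓ d) := by
    refine codisjoint_iff.2 (top_unique ?_)
    calc ⊤ = a ⊔ b := (codisjoint_iff.1 hb).symm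
      _ = a ⊔ (c ⊔ d) ⊓ b := by rw [hcd.sup_eq_top, top_inf_eq]
      _ = a ⊔ (c ⊔ d ⊓ b) := by rw [sup_inf_assoc_of_le d hcb]
      _ ≤ a ⊔ b ⊓ d := by
        rw [inf_comm d b]
        exact sup_le le_sup_left (sup_le_sup_right (hc.trans inf_le_left) _)
  refine hmin (b ⊓ d) hsupp (inf_le_left.lt_of_ne fun heq => hc0 ?_)
  exact hcd.disjoint.eq_bot_of_le (hcb.trans (inf_eq_left.1 heq))

section

variable {R : Type u} [Ring R]

theorem IsVonNeumannRegularRing.isComplemented_span_singleton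
    (hvnr : IsVonNeumannRegularRing R) (P : Ideal R) [P.IsTwoSided] (z : R ⧸ P) :
    IsComplemented (span R {z}) := by
  obtain ⟨x, rfl⟩ := P.mkQ_surjective z
  obtain ⟨s, hs⟩ := hvnr x
  -- right multiplication by the idempotent `s * x` is a projection of `R ⧸ P` onto `R ∙ x`
  let f : (R ⧸ P) →ₗ[R] R ⧸ P := P.liftQ (LinearMap.toSpanSingleton R _ (P.mkQ (s * x)))
    fun a ha => by
      rw [LinearMap.mem_ker, LinearMap.toSpanSingleton_apply, ← map_smul, smul_eq_mul,
        mkQ_apply, Quotient.mk_eq_zero]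
      exact P.mul_mem_right _ ha
  have hf : ∀ r, f (P.mkQ r) = P.mkQ (r * (s * x)) := fun r => by
    rw [mkQ_apply, liftQ_apply, LinearMap.toSpanSingleton_apply, ← map_smul, smul_eq_mul]
  have hidem : IsIdempotentElem f := by
    refine LinearMap.ext fun y => ?_
    obtain ⟨r, rfl⟩ := P.mkQ_surjective y
    rw [Module.End.mul_apply, hf, hf, mul_assoc r, mul_assoc s x (s * x), ← mul_assoc x, hs]
  have hrange : LinearMap.range f = span R {P.mkQ x} := by
    rw [range_liftQ, ← LinearMap.span_singleton_eq_range]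
    refine le_antisymm ((span_singleton_le_iff_mem _ _).2 ?_) ((span_singleton_le_iff_mem _ _).2 ?_)
    · exact mem_span_singleton.2 ⟨s, by rw [← map_smul, smul_eq_mul]⟩
    · exact mem_span_singleton.2 ⟨x, by rw [← map_smul, smul_eq_mul, ← mul_assoc, hs]⟩
  exact hrange ▸ ⟨_, LinearMap.IsIdempotentElem.isCompl hidem⟩

theorem IsVonNeumannRegularRing.isSemisimpleModule_quotient (hvnr : IsVonNeumannRegularRing R)
    (P : Ideal R) [P.IsTwoSided] [IsArtinian R (R ⧸ P)] : IsSemisimpleModule R (R ⧸ P) := by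
  refine (isSemisimpleModule_iff R _).2 (complementedLattice_of_wellFoundedLT fun a ha => ?_)
  obtain ⟨z, hz, hz0⟩ := a.ne_bot_iff.1 ha
  exact ⟨span R {z}, (span_singleton_le_iff_mem _ _).2 hz, (span_singleton_eq_bot.not).2 hz0,
    hvnr.isComplemented_span_singleton P z⟩

theorem IsVonNeumannRegularRing.map_eq_zero_of_mem_annihilator (hvnr : IsVonNeumannRegularRing R)
    {W : Type u} [AddCommGroup W] [Module R W] {I : Ideal R} (g : I →ₗ[R] W) {a : I}
    (ha : (a : R) ∈ Module.annihilator R W) : g a = 0 := by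
  obtain ⟨b, hb⟩ := hvnr a
  have hab : ((a : R) * b) • a = a := Subtype.ext hb
  calc g a = g (((a : R) * b) • a) := by rw [hab]
    _ = (a : R) • b • g a := by rw [map_smul, mul_smul]
    _ = 0 := Module.mem_annihilator.1 ha _

theorem IsVonNeumannRegularRing.injective_of_isArtinian (hvnr : IsVonNeumannRegularRing R)
    (W : Type u) [AddCommGroup W] [Module R W] [IsArtinian R (R ⧸ Module.annihilator R W)] :
    Module.Injective R W := by
  refine Module.Baer.injective fun I g => ?_
  have := hvnr.isSemisimpleModule_quotient (Module.annihilator R W)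
  -- `g` kills `I ∩ ann W`, so it factors through the image of `I` in the semisimple `R ⧸ ann W`
  let k : I →ₗ[R] R ⧸ Module.annihilator R W := (Module.annihilator R W).mkQ ∘ₗ I.subtype
  have hk : LinearMap.ker k ≤ LinearMap.ker g := fun a ha =>
    hvnr.map_eq_zero_of_mem_annihilator g ((Quotient.mk_eq_zero _).1 ha)
  obtain ⟨h, hh⟩ := IsSemisimpleModule.extension_property ((LinearMap.ker k).liftQ k le_rfl)
    (LinearMap.ker_eq_bot.1 (ker_liftQ_eq_bot' _ k rfl)) ((LinearMap.ker k).liftQ g hk)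
  refine ⟨h ∘ₗ (Module.annihilator R W).mkQ, fun x hx => ?_⟩
  simpa [k] using LinearMap.congr_fun hh (Submodule.Quotient.mk ⟨x, hx⟩)

theorem IsVonNeumannRegularRing.injective_of_isSimpleModule (hvnr : IsVonNeumannRegularRing R)
    (hpfa : HasPrimitiveFactorsArtinian R) (W : Type u) [AddCommGroup W] [Module R W]
    [IsSimpleModule R W] : Module.Injective R W :=
  have := hpfa W ‹_›
  hvnr.injective_of_isArtinian W

section Socle

variable {M N : Type u} [AddCommGroup M] [Module R M] [AddCommGroup N] [Module R N]

theorem socle_map_le (f : M →ₗ[R] N) : (socle R M).map f ≤ socle R N := by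
  rw [socle, (gc_map_comap f).l_sSup]
  refine iSup₂_le fun A hA => ?_
  have : IsSimpleModule R A := isSimpleModule_iff_isAtom.2 hA
  have hrange : LinearMap.range (f ∘ₗ A.subtype) = A.map f := by
    rw [LinearMap.range_comp, range_subtype]
  rcases (f ∘ₗ A.subtype).injective_or_eq_zero with hinj | hzero
  · have e : A ≃ₗ[R] A.map f :=
      (LinearEquiv.ofInjective _ hinj).trans (LinearEquiv.ofEq _ _ hrange)
    exact le_sSup (isSimpleModule_iff_isAtom.1 (IsSimpleModule.congr e.symm))
  · rw [← hrange, hzero, LinearMap.range_zero]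
    exact bot_le

instance isSemisimpleModule_socle : IsSemisimpleModule R (socle R M) := by
  rw [socle, sSup_eq_iSup]
  refine isSemisimpleModule_biSup_of_isSemisimpleModule_submodule fun A hA => ?_
  have : IsSimpleModule R A := isSimpleModule_iff_isAtom.2 hA
  infer_instance

end Socle

section Loewy

variable {M N : Type u} [AddCommGroup M] [Module R M] [AddCommGroup N] [Module R N]

theorem loewy_zero : loewy R M 0 = ⊥ :=
  Ordinal.limitRecOn_zero _ _ _

theorem loewy_add_one (o : Ordinal.{u}) :
    loewy R M (o + 1) = (socle R (M ⧸ loewy R M o)).comap (loewy R M o).mkQ :=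
  Ordinal.limitRecOn_add_one _ _ _ _

theorem loewy_limit {o : Ordinal.{u}} (ho : Order.IsSuccLimit o) :
    loewy R M o = ⨆ (b : Ordinal) (_ : b < o), loewy R M b :=
  Ordinal.limitRecOn_limit _ _ _ _ ho

theorem map_mkQ_loewy_add_one (o : Ordinal.{u}) :
    (loewy R M (o + 1)).map (loewy R M o).mkQ = socle R (M ⧸ loewy R M o) := by
  rw [loewy_add_one, map_comap_eq_of_surjective (loewy R M o).mkQ_surjective]

theorem loewy_le_add_one (o : Ordinal.{u}) : loewy R M o ≤ loewy R M (o + 1) := by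
  rw [loewy_add_one]
  exact le_comap_mkQ _ _

theorem loewy_mono : Monotone (loewy R M) := by
  intro a b hab
  induction b using Ordinal.limitRecOn with
  | zero => rw [nonpos_iff_eq_zero.1 hab]
  | add_one c ih =>
    rcases Order.le_succ_iff_eq_or_le.1 hab with rfl | h
    · exact le_rfl
    · exact (ih h).trans (loewy_le_add_one c)
  | limit o ho _ =>
    rcases hab.eq_or_lt with rfl | h
    · exact le_rfl
    · rw [loewy_limit ho]
      exact le_iSup₂_of_le a h le_rfl

theorem map_loewy_le (f : M →ₗ[R] N) (o : Ordinal.{u}) :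
    (loewy R M o).map f ≤ loewy R N o := by
  induction o using Ordinal.limitRecOn with
  | zero => rw [loewy_zero, Submodule.map_bot]; exact bot_le
  | add_one c ih =>
    rw [map_le_iff_le_comap, loewy_add_one, loewy_add_one, ← comap_comp,
      ← mapQ_mkQ _ _ f (h := map_le_iff_le_comap.1 ih), comap_comp]
    exact comap_mono (map_le_iff_le_comap.1 (socle_map_le _))
  | limit o ho ih =>
    rw [loewy_limit ho, loewy_limit ho]
    simp_rw [Submodule.map_iSup]
    exact iSup₂_mono ih

theorem exists_loewy_eq_top (hsa : IsSemiartinianRing R) : ∃ o, loewy R M o = ⊤ := by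
  obtain ⟨o, ho⟩ : ∃ o, loewy R M (o + 1) ≤ loewy R M o := by
    by_contra! h
    have hmono : StrictMono (loewy R M) := fun a b hab =>
      ((loewy_le_add_one a).lt_of_not_ge (h a)).trans_le (loewy_mono (Order.succ_le_of_lt hab))
    exact not_small_ordinal.{u, u} (small_of_injective hmono.injective)
  refine ⟨o, by_contra fun hne => ?_⟩
  have := Quotient.nontrivial_iff.2 hne
  refine hsa _ this (eq_bot_iff.2 ?_)
  rw [← map_mkQ_loewy_add_one, map_le_iff_le_comap, comap_bot, ker_mkQ]
  exact ho

end Loewy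

section SmulSub

variable {M N : Type u} [AddCommGroup M] [Module R M] [AddCommGroup N] [Module R N]

theorem smul_mem_smulSub {I : Submodule R R} {s : R} (hs : s ∈ I) (m : M) :
    s • m ∈ smulSub R M I :=
  subset_span ⟨s, hs, m, rfl⟩

theorem smulSub_mono {I J : Submodule R R} (h : I ≤ J) : smulSub R M I ≤ smulSub R M J :=
  span_mono fun _ ⟨s, hs, m, hm⟩ => ⟨s, h hs, m, hm⟩

theorem map_smulSub_of_surjective {f : M →ₗ[R] N} (hf : Function.Surjective f)
    (I : Submodule R R) : (smulSub R M I).map f = smulSub R N I := by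
  rw [smulSub, smulSub, map_span]
  congr 1
  ext y
  constructor
  · rintro ⟨_, ⟨s, hs, m, rfl⟩, rfl⟩
    exact ⟨s, hs, f m, (map_smul f s m).symm⟩
  · rintro ⟨s, hs, n, rfl⟩
    obtain ⟨m, rfl⟩ := hf n
    exact ⟨s • m, ⟨s, hs, m, rfl⟩, map_smul f s m⟩

theorem smulSub_loewy_le (o : Ordinal.{u}) : smulSub R M (loewy R R o) ≤ loewy R M o :=
  span_le.2 fun _ ⟨_, hs, m, hsm⟩ =>
    hsm ▸ map_loewy_le (LinearMap.toSpanSingleton R M m) o (mem_map_of_mem hs)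

theorem le_smulSub_of_not_le_annihilator {T : Submodule R N} (hT : IsAtom T) {I : Submodule R R}
    (hI : ¬ I ≤ Module.annihilator R T) : T ≤ smulSub R N I := by
  obtain ⟨s, hs, hsT⟩ := SetLike.not_le_iff_exists.1 hI
  obtain ⟨t, hst⟩ : ∃ t : T, s • t ≠ 0 := by
    simpa only [Module.mem_annihilator, not_forall] using hsT
  have hne : T ⊓ smulSub R N I ≠ ⊥ :=
    (T ⊓ smulSub R N I).ne_bot_iff.2 ⟨_, ⟨(s • t).2, smul_mem_smulSub hs (t : N)⟩,
      fun h => hst (Subtype.ext h)⟩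
  exact inf_eq_left.1 ((hT.le_iff.1 inf_le_left).resolve_left hne)

theorem loewy_le_annihilator (o : Ordinal.{u}) (T : Submodule R (M ⧸ loewy R M o)) :
    loewy R R o ≤ Module.annihilator R T := by
  refine fun s hs => Module.mem_annihilator.2 fun ⟨t, _⟩ => Subtype.ext ?_
  obtain ⟨m, rfl⟩ := (loewy R M o).mkQ_surjective t
  exact (Quotient.mk_eq_zero _).2 (smulSub_loewy_le o (smul_mem_smulSub hs m))

end SmulSub

theorem exists_loewy_le_and_not_le (hsa : IsSemiartinianRing R) {I : Submodule R R}
    (hI : I ≠ ⊤) : ∃ γ, loewy R R γ ≤ I ∧ ¬ loewy R R (γ + 1) ≤ I := by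
  obtain ⟨o, ho⟩ := exists_loewy_eq_top (M := R) hsa
  obtain ⟨δ, hδ, hmin⟩ := wellFounded_lt.has_min {δ | ¬ loewy R R δ ≤ I}
    ⟨o, show ¬ _ ≤ I by rwa [ho, top_le_iff]⟩
  have hlt : ∀ b < δ, loewy R R b ≤ I := fun b hb => not_not.1 fun h => hmin b h hb
  rcases Ordinal.zero_or_succ_or_isSuccLimit δ with rfl | ⟨γ, rfl⟩ | hδlim
  · exact absurd (loewy_zero.trans_le bot_le) hδ
  · exact ⟨γ, hlt γ (Order.lt_succ γ), hδ⟩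
  · exact absurd ((loewy_limit hδlim).trans_le (iSup₂_le hlt)) hδ

theorem isSemisimpleModule_loewyLayer (γ : Ordinal.{u}) :
    IsSemisimpleModule R (loewyLayer R γ) := by
  rw [loewyLayer, map_mkQ_loewy_add_one]
  infer_instance

theorem exists_injective_linearMap_loewyLayer {T : Type u} [AddCommGroup T] [Module R T]
    [IsSimpleModule R T] {γ : Ordinal.{u}} (hγ : loewy R R γ ≤ Module.annihilator R T)
    (hγ1 : ¬ loewy R R (γ + 1) ≤ Module.annihilator R T) :
    ∃ i : T →ₗ[R] loewyLayer R γ, Function.Injective i := by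
  obtain ⟨s, hs, hsT⟩ := SetLike.not_le_iff_exists.1 hγ1
  obtain ⟨t, hst⟩ : ∃ t : T, s • t ≠ 0 := by
    simpa only [Module.mem_annihilator, not_forall] using hsT
  let V : loewyLayer R γ →ₗ[R] T :=
    (loewy R R γ).liftQ (LinearMap.toSpanSingleton R T t)
      (fun r hr => Module.mem_annihilator.1 (hγ hr) t) ∘ₗ (loewyLayer R γ).subtype
  have hV : V ⟨(loewy R R γ).mkQ s, mem_map_of_mem hs⟩ = s • t := rfl
  have hVsurj : Function.Surjective V :=
    V.surjective_or_eq_zero.resolve_right fun h => hst (by rw [← hV, h, LinearMap.zero_apply])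
  have := isSemisimpleModule_loewyLayer (R := R) γ
  obtain ⟨i, hi⟩ := IsSemisimpleModule.lifting_property V hVsurj LinearMap.id
  exact ⟨i, Function.LeftInverse.injective (g := V) (LinearMap.congr_fun hi)⟩

theorem IsWeaklyRProjective.loewy_le_ker {M : Type u} [AddCommGroup M] [Module R M]
    (hM : IsWeaklyRProjective R M) {γ : Ordinal.{u}} (hγ : 0 < γ)
    (φ : M →ₗ[R] loewyLayer R γ) (hφ : (LinearMap.range φ).FG) :
    loewy R M γ ≤ LinearMap.ker φ := by
  obtain ⟨ψ, hψ⟩ := hM γ hγ φ hφ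
  intro x hx
  have hψx : ((loewy R R (γ + 1)).subtype ∘ₗ ψ) x ∈ loewy R R γ :=
    map_loewy_le _ γ (mem_map_of_mem hx)
  rw [LinearMap.mem_ker, ← hψ]
  exact Subtype.ext ((Quotient.mk_eq_zero _).2 hψx)

theorem IsWeaklyRProjective.eq_bot_of_injective {M : Type u} [AddCommGroup M] [Module R M]
    (hM : IsWeaklyRProjective R M) {γ : Ordinal.{u}} (hγ : 0 < γ) {N : Submodule R M}
    {T : Submodule R (M ⧸ N)} (hT : T ≤ (loewy R M γ).map N.mkQ) [Module.Injective R T]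
    [IsNoetherian R T] (i : T →ₗ[R] loewyLayer R γ) (hi : Function.Injective i) : T = ⊥ := by
  obtain ⟨Φ, hΦ⟩ :=
    Module.Injective.extension_property R T T _ T.subtype T.injective_subtype LinearMap.id
  let φ : M →ₗ[R] loewyLayer R γ := i ∘ₗ Φ ∘ₗ N.mkQ
  have hφ : loewy R M γ ≤ LinearMap.ker φ := hM.loewy_le_ker hγ φ <| by
    rw [LinearMap.range_comp]
    exact (IsNoetherian.noetherian _).map _
  refine eq_bot_iff.2 fun t ht => ?_
  obtain ⟨x, hx, rfl⟩ := hT ht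
  have hΦt : Φ (T.subtype ⟨_, ht⟩) = 0 := (map_eq_zero_iff i hi).1 (hφ hx)
  rw [← LinearMap.comp_apply, hΦ, LinearMap.id_apply] at hΦt
  exact congrArg Subtype.val hΦt

theorem socle_le_smulSub_loewy_add_one (hsa : IsSemiartinianRing R)
    (hvnr : IsVonNeumannRegularRing R) (hpfa : HasPrimitiveFactorsArtinian R)
    {M : Type u} [AddCommGroup M] [Module R M] (hM : IsWeaklyRProjective R M) (c : Ordinal.{u}) :
    socle R (M ⧸ loewy R M c) ≤ smulSub R (M ⧸ loewy R M c) (loewy R R (c + 1)) := by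
  refine sSup_le fun T hTsocle => ?_
  have hT : IsAtom T := hTsocle
  have : IsSimpleModule R T := isSimpleModule_iff_isAtom.2 hT
  have := IsSimpleModule.nontrivial R T
  obtain ⟨γ, hγ, hγ1⟩ := exists_loewy_le_and_not_le hsa
    (mt Module.annihilator_eq_top_iff.1 (not_subsingleton T))
  have hcγ : c ≤ γ := not_lt.1 fun h =>
    hγ1 ((loewy_mono (Order.succ_le_of_lt h)).trans (loewy_le_annihilator c T))
  obtain rfl | hlt := hcγ.eq_or_lt
  · exact le_smulSub_of_not_le_annihilator hT hγ1
  obtain ⟨i, hi⟩ := exists_injective_linearMap_loewyLayer hγ hγ1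
  have := hvnr.injective_of_isSimpleModule hpfa T
  have hTγ : T ≤ (loewy R M γ).map (loewy R M c).mkQ := (le_sSup hTsocle).trans <|
    (map_mkQ_loewy_add_one c).symm.trans_le (map_mono (loewy_mono (Order.succ_le_of_lt hlt)))
  exact absurd (hM.eq_bot_of_injective (hlt.trans_le' bot_le) hTγ i hi) hT.1

end

/-- Over a semiartinian von Neumann regular ring with primitive factors artinian, the socle
sequence of a weakly `R`-projective module `M` is given by `M_β = M·S_β` for every `β`. -/
theorem loewy_eq_smul_of_weaklyRProjective
    (R : Type u) [Ring R] (hsa : IsSemiartinianRing R)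
    (hvnr : IsVonNeumannRegularRing R) (hpfa : HasPrimitiveFactorsArtinian R)
    (M : Type u) [AddCommGroup M] [Module R M]
    (hM : IsWeaklyRProjective R M) :
    ∀ β : Ordinal.{u}, loewy R M β = smulSub R M (loewy R R β) := by
  intro β
  refine le_antisymm ?_ (smulSub_loewy_le β)
  induction β using Ordinal.limitRecOn with
  | zero => exact loewy_zero.trans_le bot_le
  | add_one c ih =>
    calc loewy R M (c + 1)
        ≤ (smulSub R (M ⧸ loewy R M c) (loewy R R (c + 1))).comap (loewy R M c).mkQ := by
          rw [loewy_add_one]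
          exact comap_mono (socle_le_smulSub_loewy_add_one hsa hvnr hpfa hM c)
      _ = loewy R M c ⊔ smulSub R M (loewy R R (c + 1)) := by
          rw [← map_smulSub_of_surjective (loewy R M c).mkQ_surjective, comap_map_mkQ]
      _ = smulSub R M (loewy R R (c + 1)) :=
          sup_eq_right.2 (ih.trans (smulSub_mono (loewy_le_add_one c)))
  | limit o ho ih =>
    rw [loewy_limit ho]
    exact iSup₂_le fun b hb => (ih b hb).trans (smulSub_mono (loewy_mono hb.le))
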